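/- For every integer n ≥ 1, every orbit of the set of edges of the Lucas cube Λ_n under the dihedral action generated by α and β has size n or size 2n; moreover, both sizes n and 2n occur as edge orbit sizes if and only if n ≥ 5. -/

import Mathlib

open scoped Classical

/-- Cyclic shift `α`: maps `u₁u₂⋯uₙ` to `uₙu₁⋯uₙ₋₁`. -/
def cyc {α : Type*} (u : List α) : List α := u.rotate (u.length - 1)

/-- `listPow v k` is the concatenation of `k` copies of `v`. -/
def listPow {α : Type*} (v : List α) (k : ℕ) : List α := (List.replicate k v).flatten

/-- The period of `u`: the least `k > 0` with `cyc^[k] u = u`. -/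
noncomputable def period {α : Type*} (u : List α) : ℕ := sInf {k | 0 < k ∧ cyc^[k] u = u}

/-- `u` is primitive if it is not the concatenation of `k ≥ 2` copies of a shorter string. -/
def IsPrimitive {α : Type*} (u : List α) : Prop :=
  ∀ (v : List α) (k : ℕ), 2 ≤ k → v.length < u.length → u ≠ listPow v k

/-- The dihedral orbit of `u`: `{α^j(u) : 0 ≤ j < n} ∪ {α^j(β(u)) : 0 ≤ j < n}`,
where `β` is reversal. -/
noncomputable def dihedralOrbit {α : Type*} [DecidableEq α] (u : List α) : Finset (List α) :=
  ((Finset.range u.length).image fun j => cyc^[j] u) ∪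
    ((Finset.range u.length).image fun j => cyc^[j] u.reverse)

/-- Lucas numbers: `L₀ = 2`, `L₁ = 1`, `Lₙ = Lₙ₋₁ + Lₙ₋₂`. -/
def lucas : ℕ → ℕ
  | 0 => 2
  | 1 => 1
  | n + 2 => lucas (n + 1) + lucas n

/-- All binary strings of length `n`, as a finset of boolean lists. -/
def allBool (n : ℕ) : Finset (List Bool) :=
  (Finset.univ : Finset (Fin n → Bool)).image fun f => List.ofFn f

/-- A Fibonacci string: a binary string with no two consecutive 1s. -/
def IsFibStr (l : List Bool) : Prop := l.Chain' fun a b => a = false ∨ b = false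

/-- The Fibonacci strings of length `n` (vertices of the Fibonacci cube `Γₙ`). -/
noncomputable def fibStrings (n : ℕ) : Finset (List Bool) := (allBool n).filter IsFibStr

/-- A Lucas string: a binary string with no two consecutive 1s which does not both
begin and end with 1. -/
def IsLucasStr (l : List Bool) : Prop :=
  IsFibStr l ∧ ¬(l.head? = some true ∧ l.getLast? = some true)

/-- The Lucas strings of length `n` (vertices of the Lucas cube `Λₙ`). -/
noncomputable def lucasStrings (n : ℕ) : Finset (List Bool) := (allBool n).filter IsLucasStr

/-- Two strings differ in exactly one position. -/
def DifferOne (u v : List Bool) : Prop :=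
  u.length = v.length ∧ (List.zipWith (fun a b => a != b) u v).count true = 1

/-- The edges of the Fibonacci cube `Γₙ`, as unordered pairs of vertices. -/
noncomputable def fibEdges (n : ℕ) : Finset (Finset (List Bool)) :=
  ((fibStrings n ×ˢ fibStrings n).filter fun p => DifferOne p.1 p.2).image fun p => {p.1, p.2}

/-- The edges of the Lucas cube `Λₙ`, as unordered pairs of vertices. -/
noncomputable def lucasEdges (n : ℕ) : Finset (Finset (List Bool)) :=
  ((lucasStrings n ×ˢ lucasStrings n).filter fun p => DifferOne p.1 p.2).image fun p => {p.1, p.2}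

/-- The orbit of a vertex under the reversal map `β`. -/
def revOrbit (u : List Bool) : Finset (List Bool) := {u, u.reverse}

/-- The orbit of an edge under the reversal map `β`, acting by `β({u,v}) = {β(u),β(v)}`. -/
def revEdgeOrbit (e : Finset (List Bool)) : Finset (Finset (List Bool)) :=
  {e, e.image List.reverse}

/-- The orbit of an edge under the dihedral action on strings of length `n`:
`{α^j(e) : 0 ≤ j < n} ∪ {α^j(β(e)) : 0 ≤ j < n}`. -/
noncomputable def dihedralEdgeOrbit (n : ℕ) (e : Finset (List Bool)) :
    Finset (Finset (List Bool)) :=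
  ((Finset.range n).image fun j => e.image fun u => cyc^[j] u) ∪
    ((Finset.range n).image fun j => e.image fun u => cyc^[j] u.reverse)

/-!
The cyclic shifts act freely on the edges of `Λₙ`: the two ends of an edge have different
weights, so a shift fixing an edge fixes both ends, hence also their difference string, which
contains a single `1`; every cyclic edge orbit therefore has exactly `n` elements. A dihedral edge
orbit is the union of the cyclic orbits of `e` and of its reversal, which either coincide or are
disjoint, so it has `n` or `2n` elements. For `n ≤ 4` every edge is a rotation of its reversal
(a finite check), and for `n ≥ 5` the edges `{0ⁿ, 0ⁿ⁻¹1}` and `{10ⁿ⁻¹, 1010ⁿ⁻³}` realise the two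
sizes.
-/

open Function Finset

theorem Finset.image_iterate {α : Type*} [DecidableEq α] (f : α → α) (s : Finset α) (j : ℕ) :
    (image f)^[j] s = s.image f^[j] := by
  induction j with
  | zero => simp
  | succ j ih => rw [iterate_succ_apply', ih, image_image, iterate_succ']

theorem Finset.eq_and_eq_of_pair_eq_pair {α β : Type*} [DecidableEq α] {w : α → β} {a b c d : α}
    (h : ({a, b} : Finset α) = {c, d}) (hac : w a = w c) (hbd : w b = w d) (hcd : w c ≠ w d) :
    a = c ∧ b = d := by
  rw [← coe_inj, coe_pair, coe_pair, Set.pair_eq_pair_iff] at h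
  rcases h with h | ⟨rfl, rfl⟩
  · exact h
  · exact absurd hac.symm hcd

section IterateOrbit

variable {α : Type*} [DecidableEq α] {f : α → α} {n : ℕ} {x y : α}

def iterateOrbit (f : α → α) (n : ℕ) (x : α) : Finset α := (range n).image (f^[·] x)

theorem mem_iterateOrbit (hn : 0 < n) (hx : IsPeriodicPt f n x) :
    y ∈ iterateOrbit f n x ↔ ∃ j, f^[j] x = y := by
  simp only [iterateOrbit, mem_image, mem_range]
  exact ⟨fun ⟨j, _, hj⟩ => ⟨j, hj⟩,
    fun ⟨j, hj⟩ => ⟨j % n, Nat.mod_lt _ hn, by rw [hx.iterate_mod_apply, hj]⟩⟩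

theorem card_iterateOrbit (hx : minimalPeriod f x = n) : #(iterateOrbit f n x) = n := by
  rw [iterateOrbit, card_image_of_injOn, card_range]
  simpa [hx] using iterate_injOn_Iio_minimalPeriod (f := f) (x := x)

theorem iterateOrbit_eq_of_mem (hn : 0 < n) (hx : IsPeriodicPt f n x)
    (hy : y ∈ iterateOrbit f n x) : iterateOrbit f n y = iterateOrbit f n x := by
  obtain ⟨i, rfl⟩ := (mem_iterateOrbit hn hx).1 hy
  ext z
  rw [mem_iterateOrbit hn (hx.apply_iterate i), mem_iterateOrbit hn hx]
  constructor
  · rintro ⟨j, rfl⟩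
    exact ⟨j + i, iterate_add_apply f j i x⟩
  · rintro ⟨k, rfl⟩
    refine ⟨k + (n * i - i), ?_⟩
    have hi : i ≤ n * i := Nat.le_mul_of_pos_left i hn
    rw [← iterate_add_apply, Nat.add_assoc, Nat.sub_add_cancel hi, iterate_add_apply,
      (hx.mul_const i).eq]

theorem card_iterateOrbit_union (hx : minimalPeriod f x = n) (hy : minimalPeriod f y = n) :
    #(iterateOrbit f n x ∪ iterateOrbit f n y) = if y ∈ iterateOrbit f n x then n else 2 * n := by
  rcases n.eq_zero_or_pos with rfl | hn
  · simp [iterateOrbit]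
  have hpx : IsPeriodicPt f n x := hx ▸ isPeriodicPt_minimalPeriod f x
  have hpy : IsPeriodicPt f n y := hy ▸ isPeriodicPt_minimalPeriod f y
  split_ifs with hmem
  · rw [iterateOrbit_eq_of_mem hn hpx hmem, union_self, card_iterateOrbit hx]
  · have hdisj : Disjoint (iterateOrbit f n x) (iterateOrbit f n y) := by
      refine disjoint_left.2 fun z hzx hzy => hmem ?_
      rw [← iterateOrbit_eq_of_mem hn hpx hzx, iterateOrbit_eq_of_mem hn hpy hzy,
        mem_iterateOrbit hn hpy]
      exact ⟨0, rfl⟩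
    rw [card_union_of_disjoint hdisj, card_iterateOrbit hx, card_iterateOrbit hy, two_mul]

end IterateOrbit

section Rotation

variable {α : Type*}

theorem rotate_one_cyc (l : List α) : (cyc l).rotate 1 = l := by
  cases l with
  | nil => rfl
  | cons a l => rw [cyc, List.rotate_rotate, Nat.sub_add_cancel (by simp), List.rotate_length]

theorem cyc_rotate_one (l : List α) : cyc (l.rotate 1) = l := by
  cases l with
  | nil => rfl
  | cons a l => rw [cyc, List.length_rotate, List.rotate_rotate, Nat.add_sub_cancel' (by simp),
      List.rotate_length]

theorem iterate_rotate_one (l : List α) (j : ℕ) : (·.rotate 1)^[j] l = l.rotate j := by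
  induction j with
  | zero => simp
  | succ j ih => rw [iterate_succ_apply', ih, List.rotate_rotate]

theorem cyc_iterate_eq_iff {l l' : List α} {j : ℕ} : cyc^[j] l = l' ↔ l = l'.rotate j := by
  have hl : LeftInverse (·.rotate 1) (cyc : List α → List α) := rotate_one_cyc
  have hr : RightInverse (·.rotate 1) (cyc : List α → List α) := cyc_rotate_one
  rw [← iterate_rotate_one]
  constructor
  · rintro rfl
    exact (hl.iterate j l).symm
  · rintro rfl
    exact hr.iterate j l'

theorem cyc_iterate_perm (l : List α) (j : ℕ) : (cyc^[j] l).Perm l := by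
  have hl : l = (cyc^[j] l).rotate j := cyc_iterate_eq_iff.1 rfl
  conv_rhs => rw [hl]
  exact (List.rotate_perm _ _).symm

theorem cyc_iterate_length_mul {l : List α} (k : ℕ) : cyc^[l.length * k] l = l :=
  cyc_iterate_eq_iff.2 (List.rotate_length_mul l k).symm

theorem getElem_inj_of_count_eq_one [DecidableEq α] {l : List α} {a : α} (ha : l.count a = 1)
    {i k : ℕ} (hi : i < l.length) (hk : k < l.length) (hia : l[i] = a) (hka : l[k] = a) :
    i = k := by
  by_contra hne
  have hdup : l.Duplicate a := by
    rw [List.duplicate_iff_exists_distinct_get]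
    rcases Nat.lt_or_gt_of_ne hne with h | h
    · exact ⟨⟨i, hi⟩, ⟨k, hk⟩, h, hia.symm, hka.symm⟩
    · exact ⟨⟨k, hk⟩, ⟨i, hi⟩, h, hka.symm, hia.symm⟩
  have := List.duplicate_iff_two_le_count.1 hdup
  omega

/-- A rotation fixing a list in which `a` occurs exactly once moves that occurrence to itself. -/
theorem length_dvd_of_rotate_eq_self [DecidableEq α] {l : List α} {a : α} {r : ℕ}
    (ha : l.count a = 1) (hr : l.rotate r = l) : l.length ∣ r := by
  obtain ⟨p, hp, hpa⟩ := List.getElem_of_mem (List.count_pos_iff.1 (by omega : 0 < l.count a))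
  have hmod : (p + r) % l.length < l.length := Nat.mod_lt _ (by omega)
  have hshift : l[(p + r) % l.length] = a := by
    rw [← hpa, ← List.getElem_rotate l r p (by rwa [List.length_rotate])]
    simp only [hr]
  have hfix := getElem_inj_of_count_eq_one ha hmod hp hshift hpa
  refine (Nat.modEq_zero_iff_dvd).1 (Nat.ModEq.add_left_cancel' p ?_)
  rw [add_zero, Nat.ModEq, hfix, Nat.mod_eq_of_lt hp]

end Rotation

theorem count_zipWith_bne_add {u v : List Bool} (h : u.length = v.length) :
    (List.zipWith (fun a b => a != b) u v).count true +
        2 * (List.zipWith (· && ·) u v).count true = u.count true + v.count true := by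
  induction u generalizing v with
  | nil => cases v <;> simp_all
  | cons a u ih =>
    cases v with
    | nil => simp at h
    | cons b v =>
      have := ih (v := v) (by simpa using h)
      cases a <;> cases b <;> simp <;> omega

/-- Two strings at Hamming distance one have weights of different parity. -/
theorem DifferOne.count_ne {u v : List Bool} (h : DifferOne u v) :
    u.count true ≠ v.count true := by
  have := count_zipWith_bne_add h.1
  rw [h.2] at this
  omega

theorem DifferOne.length_pos {u v : List Bool} (h : DifferOne u v) : 0 < u.length := by
  cases u with
  | nil => simp [DifferOne] at h
  | cons a u => simp

theorem DifferOne.reverse {u v : List Bool} (h : DifferOne u v) :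
    DifferOne u.reverse v.reverse := by
  refine ⟨by simpa using h.1, ?_⟩
  rw [← List.reverse_zipWith h.1, List.count_reverse]
  exact h.2

section LucasCube

variable {n : ℕ} {u v : List Bool}

theorem mem_allBool {l : List Bool} : l ∈ allBool n ↔ l.length = n := by
  simp only [allBool, mem_image, mem_univ, true_and]
  refine ⟨?_, ?_⟩
  · rintro ⟨f, rfl⟩
    exact List.length_ofFn
  · rintro rfl
    exact ⟨l.get, List.ofFn_get l⟩

theorem mem_lucasEdges {e : Finset (List Bool)} :
    e ∈ lucasEdges n ↔ ∃ u v : List Bool, u.length = n ∧ v.length = n ∧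
      IsLucasStr u ∧ IsLucasStr v ∧ DifferOne u v ∧ e = {u, v} := by
  simp only [lucasEdges, lucasStrings, mem_image, mem_filter, mem_product, mem_allBool,
    Prod.exists]
  constructor
  · rintro ⟨u, v, ⟨⟨⟨hu, hLu⟩, hv, hLv⟩, h⟩, rfl⟩
    exact ⟨u, v, hu, hv, hLu, hLv, h, rfl⟩
  · rintro ⟨u, v, hu, hv, hLu, hLv, h, rfl⟩
    exact ⟨u, v, ⟨⟨⟨hu, hLu⟩, hv, hLv⟩, h⟩, rfl⟩

theorem isPeriodicPt_image_cyc_iff (hu : u.length = n) (hv : v.length = n) (h : DifferOne u v)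
    {j : ℕ} : IsPeriodicPt (image cyc) j {u, v} ↔ n ∣ j := by
  rw [IsPeriodicPt, IsFixedPt, image_iterate, image_insert, image_singleton]
  constructor
  · intro hfix
    obtain ⟨hu', hv'⟩ := eq_and_eq_of_pair_eq_pair (w := List.count true) hfix
      ((cyc_iterate_perm u j).count_eq true) ((cyc_iterate_perm v j).count_eq true) h.count_ne
    rw [cyc_iterate_eq_iff] at hu' hv'
    have hrot : (List.zipWith (fun a b => a != b) u v).rotate j =
        List.zipWith (fun a b => a != b) u v := by
      rw [List.zipWith_rotate_distrib _ _ _ _ h.1, ← hu', ← hv']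
    simpa [hu, hv] using length_dvd_of_rotate_eq_self h.2 hrot
  · rintro ⟨k, rfl⟩
    rw [← hu, cyc_iterate_length_mul, hu, ← hv, cyc_iterate_length_mul]

theorem minimalPeriod_image_cyc (hu : u.length = n) (hv : v.length = n) (h : DifferOne u v) :
    minimalPeriod (image cyc) {u, v} = n :=
  Nat.dvd_antisymm
    (isPeriodicPt_iff_minimalPeriod_dvd.1 ((isPeriodicPt_image_cyc_iff hu hv h).2 dvd_rfl))
    ((isPeriodicPt_image_cyc_iff hu hv h).1 (isPeriodicPt_minimalPeriod _ _))

theorem dihedralEdgeOrbit_eq_union (e : Finset (List Bool)) :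
    dihedralEdgeOrbit n e =
      iterateOrbit (image cyc) n e ∪ iterateOrbit (image cyc) n (e.image List.reverse) := by
  simp only [dihedralEdgeOrbit, iterateOrbit, image_iterate, image_image]
  rfl

theorem reverse_mem_iterateOrbit_iff (hu : u.length = n) (hv : v.length = n)
    (h : DifferOne u v) :
    ({u, v} : Finset (List Bool)).image List.reverse ∈ iterateOrbit (image cyc) n {u, v} ↔
      ∃ j, cyc^[j] u = u.reverse ∧ cyc^[j] v = v.reverse := by
  have hper := (isPeriodicPt_image_cyc_iff hu hv h).2 dvd_rfl
  rw [mem_iterateOrbit (hu ▸ h.length_pos) hper]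
  simp only [image_iterate, image_insert, image_singleton]
  refine exists_congr fun j => ⟨fun hj => ?_, fun ⟨hju, hjv⟩ => by rw [hju, hjv]⟩
  refine eq_and_eq_of_pair_eq_pair (w := List.count true) hj ?_ ?_ (by simpa using h.count_ne)
  · rw [(cyc_iterate_perm u j).count_eq, List.count_reverse]
  · rw [(cyc_iterate_perm v j).count_eq, List.count_reverse]

theorem card_dihedralEdgeOrbit (hu : u.length = n) (hv : v.length = n) (h : DifferOne u v) :
    #(dihedralEdgeOrbit n {u, v}) =
      if ∃ j, cyc^[j] u = u.reverse ∧ cyc^[j] v = v.reverse then n else 2 * n := by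
  have hrev : ({u, v} : Finset (List Bool)).image List.reverse = {u.reverse, v.reverse} := by
    rw [image_insert, image_singleton]
  rw [dihedralEdgeOrbit_eq_union, card_iterateOrbit_union (minimalPeriod_image_cyc hu hv h)
    (hrev ▸ minimalPeriod_image_cyc (by simpa) (by simpa) h.reverse)]
  simp only [reverse_mem_iterateOrbit_iff hu hv h]

theorem isFibStr_iff_isChain {l : List Bool} :
    IsFibStr l ↔ l.IsChain fun a b => a = false ∨ b = false := Iff.rfl

instance : DecidablePred IsFibStr := fun _ => decidable_of_iff' _ isFibStr_iff_isChain

instance : DecidablePred IsLucasStr := fun _ => inferInstanceAs (Decidable (_ ∧ _))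

instance (u v : List Bool) : Decidable (DifferOne u v) := inferInstanceAs (Decidable (_ ∧ _))

theorem exists_cyc_iterate_eq_reverse_of_length_lt_five (hn : u.length < 5)
    (hv : v.length = u.length) (hLu : IsLucasStr u) (hLv : IsLucasStr v) (h : DifferOne u v) :
    ∃ j, cyc^[j] u = u.reverse ∧ cyc^[j] v = v.reverse := by
  have hsmall : ∀ n < 5, ∀ u ∈ allBool n, ∀ v ∈ allBool n, IsLucasStr u → IsLucasStr v →
      DifferOne u v → ∃ j < n, cyc^[j] u = u.reverse ∧ cyc^[j] v = v.reverse := by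
    intro n hn
    interval_cases n <;> decide
  obtain ⟨j, -, hj⟩ := hsmall _ hn u (mem_allBool.2 rfl) v (mem_allBool.2 hv) hLu hLv h
  exact ⟨j, hj⟩

/-- The edge `{0ⁿ, 0ⁿ⁻¹1}`: one cyclic shift reverses it. -/
theorem exists_card_dihedralEdgeOrbit_eq (hn : 2 ≤ n) :
    ∃ e ∈ lucasEdges n, #(dihedralEdgeOrbit n e) = n := by
  obtain ⟨m, rfl⟩ : ∃ m, n = m + 2 := ⟨n - 2, by omega⟩
  set u := List.replicate (m + 2) false
  set v := List.replicate (m + 1) false ++ [true]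
  have hu : u.length = m + 2 := List.length_replicate
  have hv : v.length = m + 2 := by simp [v]
  have h : DifferOne u v := by
    refine ⟨hu.trans hv.symm, ?_⟩
    simp [u, v, List.replicate_succ', List.zipWith_append, List.count_replicate]
  have hLu : IsLucasStr u := by
    simp [u, IsLucasStr, isFibStr_iff_isChain, List.isChain_replicate_of_rel, List.head?_replicate]
  have hLv : IsLucasStr v := by
    simp [v, IsLucasStr, isFibStr_iff_isChain, List.isChain_append, List.isChain_replicate_of_rel,
      List.getLast?_replicate, List.head?_replicate]
  refine ⟨{u, v}, mem_lucasEdges.2 ⟨u, v, hu, hv, hLu, hLv, h, rfl⟩, ?_⟩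
  rw [card_dihedralEdgeOrbit hu hv h, if_pos]
  refine ⟨1, ?_, ?_⟩
  · simp [u, cyc, List.rotate_replicate]
  · simpa [v, cyc] using List.rotate_append_length_eq (List.replicate (m + 1) false) [true]

/-- The edge `{10ⁿ⁻¹, 1010ⁿ⁻³}`: a rotation reversing `10ⁿ⁻¹` is a left shift by one, which
does not reverse `1010ⁿ⁻³` once `n ≥ 5`. -/
theorem exists_card_dihedralEdgeOrbit_eq_two_mul (hn : 5 ≤ n) :
    ∃ e ∈ lucasEdges n, #(dihedralEdgeOrbit n e) = 2 * n := by
  obtain ⟨m, rfl⟩ : ∃ m, n = m + 5 := ⟨n - 5, by omega⟩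
  set u := true :: List.replicate (m + 4) false
  set v := true :: false :: true :: List.replicate (m + 2) false
  have hu : u.length = m + 5 := by simp [u]
  have hv : v.length = m + 5 := by simp [v]
  have h : DifferOne u v := by
    refine ⟨hu.trans hv.symm, ?_⟩
    simp [u, v, List.replicate_succ, List.count_replicate]
  have hLu : IsLucasStr u := by
    simp [u, IsLucasStr, isFibStr_iff_isChain, List.isChain_cons, List.isChain_replicate_of_rel,
      List.getLast?_cons, List.getLast?_replicate, List.head?_replicate]
  have hLv : IsLucasStr v := by
    simp [v, IsLucasStr, isFibStr_iff_isChain, List.isChain_cons, List.isChain_replicate_of_rel,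
      List.getLast?_cons, List.getLast?_replicate, List.head?_replicate]
  refine ⟨{u, v}, mem_lucasEdges.2 ⟨u, v, hu, hv, hLu, hLv, h, rfl⟩, ?_⟩
  rw [card_dihedralEdgeOrbit hu hv h, if_neg]
  rintro ⟨j, hju, hjv⟩
  rw [cyc_iterate_eq_iff] at hju hjv
  have hurev : u.reverse = u.rotate 1 := by simp [u]
  have hdvd : u.length ∣ 1 + j := by
    refine length_dvd_of_rotate_eq_self (a := true) (by simp [u, List.count_replicate]) ?_
    rw [← List.rotate_rotate, ← hurev, ← hju]
  rw [hu] at hdvd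
  obtain ⟨k, hk⟩ := hdvd
  have hvrev : v.rotate 1 = v.reverse := by
    conv_lhs => rw [hjv]
    rw [List.rotate_rotate, Nat.add_comm, hk, ← hv, ← List.length_reverse, List.rotate_length_mul]
  have := congrArg (·[1]?) hvrev
  simp [v] at this

end LucasCube

theorem lucas_edge_orbit_sizes_general (n : ℕ) :
    (∀ e ∈ lucasEdges n,
      (dihedralEdgeOrbit n e).card = n ∨ (dihedralEdgeOrbit n e).card = 2 * n) ∧
    (((∃ e ∈ lucasEdges n, (dihedralEdgeOrbit n e).card = n) ∧
      (∃ e ∈ lucasEdges n, (dihedralEdgeOrbit n e).card = 2 * n)) ↔ 5 ≤ n) := by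
  refine ⟨fun e he => ?_, ⟨fun ⟨_, e, he, hcard⟩ => ?_, fun hn =>
    ⟨exists_card_dihedralEdgeOrbit_eq (by omega), exists_card_dihedralEdgeOrbit_eq_two_mul hn⟩⟩⟩
  · obtain ⟨u, v, hu, hv, -, -, h, rfl⟩ := mem_lucasEdges.1 he
    rw [card_dihedralEdgeOrbit hu hv h]
    split_ifs <;> simp
  · obtain ⟨u, v, hu, hv, hLu, hLv, h, rfl⟩ := mem_lucasEdges.1 he
    by_contra! hn
    rw [card_dihedralEdgeOrbit hu hv h, if_pos (exists_cyc_iterate_eq_reverse_of_length_lt_five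
      (hu ▸ hn) (hv.trans hu.symm) hLu hLv h)] at hcard
    have := h.length_pos
    omega

/-- For `n ≥ 1`, every dihedral edge orbit of the Lucas cube `Λₙ` has size `n` or `2n`;
moreover both sizes `n` and `2n` occur as edge orbit sizes iff `n ≥ 5`. -/
theorem lucas_edge_orbit_sizes (n : ℕ) (hn : 1 ≤ n) :
    (∀ e ∈ lucasEdges n,
      (dihedralEdgeOrbit n e).card = n ∨ (dihedralEdgeOrbit n e).card = 2 * n) ∧
    (((∃ e ∈ lucasEdges n, (dihedralEdgeOrbit n e).card = n) ∧
      (∃ e ∈ lucasEdges n, (dihedralEdgeOrbit n e).card = 2 * n)) ↔ 5 ≤ n) :=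
  lucas_edge_orbit_sizes_general n
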